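/- For the path graph on n vertices, Σ_{z ∈ F_2^n} (-1)^(Σ_{i=1}^{n-1} z_i z_{i+1} + Σ_i z_i) = ± 2^(⌈n/2⌉) or 0 depending on parity, and its absolute value is at most 2^(⌈n/2⌉). -/
import Mathlib

set_option maxHeartbeats 1000000

/-- The partition-function-like sum
Σ_{z ∈ F_2^n} (-1)^(Σ_{i=1}^{n-1} z_i z_{i+1} + Σ_i z_i),
i.e. the Walsh coefficient at y = (1,…,1) of the path-graph quadratic form. -/
def ghzSum (n : ℕ) : ℤ :=
  ∑ z : Fin n → ZMod 2,
    (-1 : ℤ) ^ (((∑ i ∈ (Finset.range (n - 1)).attach,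
        z ⟨i.1, by have := Finset.mem_range.mp i.2; omega⟩ *
        z ⟨i.1 + 1, by have := Finset.mem_range.mp i.2; omega⟩) +
      ∑ i, z i).val)

/-- Auxiliary sum with an extra linear term `a * z 0`. -/
def gh (n : ℕ) (a : ZMod 2) : ℤ :=
  ∑ z : Fin (n+1) → ZMod 2,
    (-1 : ℤ) ^ ((∑ i : Fin n, z i.castSucc * z i.succ + ∑ i, z i + a * z 0).val)

lemma sign_add (x y : ZMod 2) :
    (-1 : ℤ) ^ ((x + y).val) = (-1 : ℤ) ^ x.val * (-1 : ℤ) ^ y.val := by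
  revert x y; decide

lemma quad_eq (n : ℕ) (z : Fin (n+1) → ZMod 2) :
    (∑ i ∈ (Finset.range ((n+1) - 1)).attach,
        z ⟨i.1, by have := Finset.mem_range.mp i.2; omega⟩ *
        z ⟨i.1 + 1, by have := Finset.mem_range.mp i.2; omega⟩) =
      ∑ i : Fin n, z i.castSucc * z i.succ := by
  refine Finset.sum_bij' (fun i _ => (⟨i.1, by have := Finset.mem_range.mp i.2; omega⟩ : Fin n))
    (fun i _ => ⟨i.1, Finset.mem_range.mpr (by omega)⟩) ?_ ?_ ?_ ?_ ?_ <;>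
    simp [Fin.castSucc, Fin.succ, Fin.castAdd, Fin.castLE]

lemma bridge (n : ℕ) : ghzSum (n+1) = gh n 0 := by
  unfold ghzSum gh
  refine Finset.sum_congr rfl fun z _ => ?_
  rw [quad_eq]
  simp

lemma gh_rec (n : ℕ) (a : ZMod 2) :
    gh (n+1) a = gh n 0 + (-1 : ℤ) ^ ((1 + a).val) * gh n 1 := by
  unfold gh
  rw [← (Fin.consEquiv (fun _ : Fin (n+2) => ZMod 2)).sum_comp]
  rw [Fintype.sum_prod_type]
  have key : ∀ (b : ZMod 2) (w : Fin (n+1) → ZMod 2),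
      (∑ i : Fin (n+1), (Fin.cons b w : Fin (n+2) → ZMod 2) i.castSucc *
          (Fin.cons b w : Fin (n+2) → ZMod 2) i.succ) +
        (∑ i, (Fin.cons b w : Fin (n+2) → ZMod 2) i) +
        a * (Fin.cons b w : Fin (n+2) → ZMod 2) 0
      = (∑ i : Fin n, w i.castSucc * w i.succ + ∑ i, w i + 0 * w 0)
        + ((1 + a) * b + b * w 0) := by
    intro b w
    rw [Fin.sum_univ_succ
      (f := fun i : Fin (n+1) => (Fin.cons b w : Fin (n+2) → ZMod 2) i.castSucc *
        (Fin.cons b w : Fin (n+2) → ZMod 2) i.succ),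
      Fin.sum_univ_succ (f := (Fin.cons b w : Fin (n+2) → ZMod 2))]
    simp only [Fin.cons_zero, Fin.cons_succ, ← Fin.succ_castSucc, Fin.castSucc_zero]
    ring
  have sum2 : ∀ f : ZMod 2 → ℤ, ∑ b, f b = f 0 + f 1 := fun f => Fin.sum_univ_two f
  rw [sum2]
  simp only [Fin.consEquiv_apply]
  congr 1
  · refine Finset.sum_congr rfl fun w _ => ?_
    congr 1
    rw [key 0 w]; ring
  · rw [Finset.mul_sum]
    refine Finset.sum_congr rfl fun w _ => ?_
    have h1 : (∑ i : Fin (n+1), (Fin.cons 1 w : Fin (n+2) → ZMod 2) i.castSucc *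
          (Fin.cons 1 w : Fin (n+2) → ZMod 2) i.succ) +
        (∑ i, (Fin.cons 1 w : Fin (n+2) → ZMod 2) i) +
        a * (Fin.cons 1 w : Fin (n+2) → ZMod 2) 0
        = (1 + a) + (∑ i : Fin n, w i.castSucc * w i.succ + ∑ i, w i + 1 * w 0) := by
      rw [key 1 w]; ring
    rw [h1, sign_add]

lemma gh_rec0 (n : ℕ) : gh (n+1) 0 = gh n 0 - gh n 1 := by
  have h : ((-1 : ℤ)) ^ ((1 + (0 : ZMod 2)).val) = -1 := by decide
  rw [gh_rec, h]; ring

lemma gh_rec1 (n : ℕ) : gh (n+1) 1 = gh n 0 + gh n 1 := by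
  have h : ((-1 : ℤ)) ^ ((1 + (1 : ZMod 2)).val) = 1 := by decide
  rw [gh_rec, h]; ring

lemma gh_four (n : ℕ) : gh (n+4) 0 = -4 * gh n 0 := by
  have h3 : n + 4 = n + 3 + 1 := rfl
  rw [h3, gh_rec0, gh_rec1, show n+3 = n+2+1 from rfl, gh_rec0, gh_rec1,
    show n+2 = n+1+1 from rfl, gh_rec0, gh_rec1, gh_rec0]
  ring

lemma ghz_step (m : ℕ) : ghzSum (m+5) = -4 * ghzSum (m+1) := by
  rw [show m+5 = (m+4)+1 from rfl, bridge, bridge]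
  exact gh_four m

/-- the path-graph sum Σ_z (-1)^(Σ z_i z_{i+1} + Σ z_i) equals
±2^⌈n/2⌉ or 0 depending on parity, and its absolute value is at most 2^⌈n/2⌉. -/
theorem ghzSum_values (n : ℕ) :
    (ghzSum n = 2 ^ ((n + 1) / 2) ∨ ghzSum n = -(2 ^ ((n + 1) / 2)) ∨ ghzSum n = 0) ∧
    |ghzSum n| ≤ 2 ^ ((n + 1) / 2) := by
  induction n using Nat.strong_induction_on with
  | _ n ih =>
    match n with
    | 0 => exact ⟨Or.inl (by decide), by decide⟩
    | 1 => exact ⟨Or.inr (Or.inr (by decide)), by decide⟩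
    | 2 => exact ⟨Or.inr (Or.inl (by decide)), by decide⟩
    | 3 => exact ⟨Or.inr (Or.inl (by decide)), by decide⟩
    | 4 => exact ⟨Or.inr (Or.inl (by decide)), by decide⟩
    | (m+5) =>
      obtain ⟨hcase, habs⟩ := ih (m+1) (by omega)
      have h4 := ghz_step m
      have hexp : ((m+5) + 1) / 2 = ((m+1) + 1) / 2 + 2 := by omega
      have hpow : (2 : ℤ) ^ (((m+5) + 1) / 2) = 4 * 2 ^ (((m+1) + 1) / 2) := by
        rw [hexp, pow_add]; ring
      constructor
      · rcases hcase with h | h | h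
        · exact Or.inr (Or.inl (by rw [h4, h, hpow]; ring))
        · exact Or.inl (by rw [h4, h, hpow]; ring)
        · exact Or.inr (Or.inr (by rw [h4, h]; ring))
      · rw [h4, hpow, abs_mul]
        have h4' : |(-4 : ℤ)| = 4 := by decide
        rw [h4']
        have hp : (0:ℤ) ≤ 2 ^ (((m+1) + 1) / 2) := by positivity
        nlinarith [abs_nonneg (ghzSum (m+1))]
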